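/- arXiv:0905.2665 — 2 statements merged into one kernel-verified Lean document; each statement's English description precedes it below -/
import Mathlib

section
/- In Kleene's K₂ (functions ℕ → ℕ with the standard interrogation application), define E₀ = ⟨⟩ and E_{n+1} = ⟨E_n⟩ (codes of sequences), and B = { α ∈ ℕ^ℕ : α(E_n) = n for all n }. Then: (1) if α ∈ B and αβ is defined in K₂, then αβ ∈ B; (2) B contains elements k', s' satisfying the pca axioms (k) and (s) for B; hence B is a sub-pca of K₂ that is not closed under 'recursive in' (not downwards closed w.r.t. Turing reducibility). -/
open Classical

noncomputable section

namespace OostenK2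

universe u

/-! ### Finite partial functions -/

/-- Finite partial functions `A ⇀ A`, as finite functional graphs,
ordered by inclusion of graphs. -/
abbrev FPF (A : Type u) : Type u :=
  {p : Set (A × A) // (∀ ⦃a b b'⦄, (a, b) ∈ p → (a, b') ∈ p → b = b') ∧ p.Finite}

variable {A : Type u}

/-- The domain of a finite partial function. -/
def FPF.dom (p : FPF A) : Set A := Prod.fst '' p.val

/-- The empty finite partial function (the root of sequential trees). -/
def FPF.empty (A : Type u) : FPF A :=
  ⟨∅, fun _ _ _ h => absurd h (Set.notMem_empty _), Set.finite_empty⟩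

/-- A total function `α` extends the finite partial function `p`. -/
def agrees (α : A → A) (p : FPF A) : Prop := ∀ ⦃a b⦄, (a, b) ∈ p.val → α a = b

/-- A partial function `β` extends the finite partial function `p`. -/
def agreesP (β : A → Option A) (p : FPF A) : Prop :=
  ∀ ⦃a b⦄, (a, b) ∈ p.val → β a = some b

/-- Two finite partial functions are compatible if their union is a function. -/
def compatFPF (s t : FPF A) : Prop :=
  ∀ ⦃a b b'⦄, (a, b) ∈ s.val → (a, b') ∈ t.val → b = b'

/-! ### Trees -/

section Trees

variable {X : Type*} [PartialOrder X]

/-- A leaf of `T`: an element of `T` with no strict extension in `T`. -/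
def IsLeaf (T : Set X) (p : X) : Prop := p ∈ T ∧ ¬∃ q ∈ T, p < q

/-- `q` is an immediate successor of `p` in `T`. -/
def ImmSucc (T : Set X) (p q : X) : Prop :=
  q ∈ T ∧ p < q ∧ ¬∃ t ∈ T, p < t ∧ t < q

/-- `T` is a tree with root `root`: the root belongs to `T`, lies below every
element, and the predecessors of any element form a chain. -/
def IsTreeOn (root : X) (T : Set X) : Prop :=
  root ∈ T ∧ (∀ p ∈ T, root ≤ p) ∧ ∀ p ∈ T, IsChain (· ≤ ·) {t | t ∈ T ∧ t ≤ p}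

/-- A tree is well-founded iff it has no infinite strictly increasing path. -/
def WellFoundedTree (T : Set X) : Prop :=
  ¬∃ f : ℕ → X, (∀ n, f n ∈ T) ∧ StrictMono f

end Trees

/-- A sequential tree: a tree of finite partial functions, rooted at the empty
function, in which all immediate successors of a non-leaf `p` have domain
`dom p ∪ {a}` for a single `a ∉ dom p`. -/
def IsSeqTree (T : Set (FPF A)) : Prop :=
  IsTreeOn (FPF.empty A) T ∧
  ∀ p ∈ T, ¬IsLeaf T p →
    ∃ a ∉ FPF.dom p, ∀ q, ImmSucc T p q → FPF.dom q = insert a (FPF.dom p)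

/-- A total sequential tree: the immediate successors of a non-leaf `p` are
*all* extensions of `p` with domain `dom p ∪ {a}`. -/
def IsTotalSeqTree (T : Set (FPF A)) : Prop :=
  IsTreeOn (FPF.empty A) T ∧
  ∀ p ∈ T, ¬IsLeaf T p →
    ∃ a ∉ FPF.dom p,
      ∀ q : FPF A, ImmSucc T p q ↔ p < q ∧ FPF.dom q = insert a (FPF.dom p)

/-- `Φ` (as a relation `(A → A) → A → Prop`) is a partial sequential function:
`Φ α = b` iff the path of `α` through some total sequential tree `T` ends in a
leaf `v` with `F v = b`. -/
def SeqRel (Φ : (A → A) → A → Prop) : Prop :=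
  ∃ (T : Set (FPF A)) (F : FPF A → A), IsTotalSeqTree T ∧
    ∀ α b, Φ α b ↔ ∃ v, IsLeaf T v ∧ agrees α v ∧ F v = b

/-- A total bisequential tree: pairs of finite partial functions ordered by
pairwise inclusion; at every non-leaf, either the first or the second component
is interrogated at a single new argument, with all possible answers present. -/
def IsTotalBiTree (T : Set (FPF A × FPF A)) : Prop :=
  IsTreeOn (FPF.empty A, FPF.empty A) T ∧
  ∀ p ∈ T, ¬IsLeaf T p →
    (∃ a ∉ FPF.dom p.1, ∀ q : FPF A × FPF A,
        ImmSucc T p q ↔ q.2 = p.2 ∧ p.1 ≤ q.1 ∧ FPF.dom q.1 = insert a (FPF.dom p.1)) ∨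
    (∃ b ∉ FPF.dom p.2, ∀ q : FPF A × FPF A,
        ImmSucc T p q ↔ q.1 = p.1 ∧ p.2 ≤ q.2 ∧ FPF.dom q.2 = insert b (FPF.dom p.2))

/-- `G` is a total bisequential function. -/
def BiSeqTotal (G : (A → A) → (A → A) → A) : Prop :=
  ∃ (T : Set (FPF A × FPF A)) (F : FPF A × FPF A → A), IsTotalBiTree T ∧
    ∀ α β, ∃ v, IsLeaf T v ∧ agrees α v.1 ∧ agrees β v.2 ∧ G α β = F v

/-! ### Interrogations (total functions)

Throughout, `mk : List A → A` is an injective coding of finite sequences,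
`qp b` is the code `⟨q,b⟩` of a query and `rp c` the code `⟨r,c⟩` of a result. -/

/-- `L` is an interrogation of `β` by `α`. -/
def Interrog (mk : List A → A) (qp : A → A) (α β : A → A) (L : List A) : Prop :=
  ∀ j (hj : j < L.length), ∃ b, α (mk (L.take j)) = qp b ∧ β b = L[j]'hj

/-- `φ_α(β) = c` via interrogations. -/
def phiRel (mk : List A → A) (qp rp : A → A) (α β : A → A) (c : A) : Prop :=
  ∃ L, Interrog mk qp α β L ∧ α (mk L) = rp c

/-- `L` is an `a`-interrogation of `β` by `α`. -/
def AInterrog (mk : List A → A) (qp : A → A) (a : A) (α β : A → A) (L : List A) : Prop :=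
  ∀ j (hj : j < L.length), ∃ b, α (mk (a :: L.take j)) = qp b ∧ β b = L[j]'hj

/-- `φ^a(α,β) = c` via `a`-interrogations. -/
def phiA (mk : List A → A) (qp rp : A → A) (a : A) (α β : A → A) (c : A) : Prop :=
  ∃ L, AInterrog mk qp a α β L ∧ α (mk (a :: L)) = rp c

/-- The application of `K₂(A)`: `αβ` is defined with value `γ` iff
`φ^a(α,β) = γ a` for every `a`. -/
def AppRel (mk : List A → A) (qp rp : A → A) (α β γ : A → A) : Prop :=
  ∀ a, phiA mk qp rp a α β (γ a)

/-! ### Partial combinatory algebras (abstractly) -/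

/-- A set with a partial binary application. -/
structure PCAStruct (X : Type*) where
  app : X → X → Part X

/-- Extension of the application to `Part`; `Part`-equality is Kleene equality. -/
def pap {X : Type*} (S : PCAStruct X) (u v : Part X) : Part X :=
  u.bind fun a => v.bind fun b => S.app a b

/-- `S` is a partial combinatory algebra: there are `k`, `s` with
`kxy = x` (everywhere defined), `sxy` defined, and `sxyz ≃ (xz)(yz)`. -/
def IsPCA {X : Type*} (S : PCAStruct X) : Prop :=
  ∃ k s : X,
    (∀ x y : X, pap S (S.app k x) (Part.some y) = Part.some x) ∧
    (∀ x y : X, (pap S (S.app s x) (Part.some y)).Dom) ∧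
    (∀ x y z : X,
      pap S (pap S (S.app s x) (Part.some y)) (Part.some z)
        = pap S (S.app x z) (S.app y z))

/-- `t`, `f` are Booleans of `S`: distinct, with a definition-by-cases combinator. -/
def IsBooleans {X : Type*} (S : PCAStruct X) (t f : X) : Prop :=
  t ≠ f ∧ ∃ C : X, ∀ a b : X,
    pap S (pap S (S.app C t) (Part.some a)) (Part.some b) = Part.some a ∧
    pap S (pap S (S.app C f) (Part.some a)) (Part.some b) = Part.some b

/-- Applicative morphism `γ : S → T`: a total relation such that some realizer
`r` tracks application. -/
def IsAppMor {X Y : Type*} (S : PCAStruct X) (T : PCAStruct Y) (γ : X → Set Y) : Prop :=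
  (∀ x, (γ x).Nonempty) ∧
  ∃ r : Y, ∀ x x' z : X, z ∈ S.app x x' → ∀ b ∈ γ x, ∀ b' ∈ γ x',
    ∃ w, w ∈ pap T (T.app r b) (Part.some b') ∧ w ∈ γ z

/-- The preorder on applicative morphisms. -/
def morLE {X Y : Type*} (T : PCAStruct Y) (γ γ' : X → Set Y) : Prop :=
  ∃ s : Y, ∀ x : X, ∀ b ∈ γ x, ∃ c, c ∈ T.app s b ∧ c ∈ γ' x

def morEquiv {X Y : Type*} (T : PCAStruct Y) (γ γ' : X → Set Y) : Prop :=
  morLE T γ γ' ∧ morLE T γ' γ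

/-- Composition of applicative morphisms (as total relations). -/
def morComp {X Y Z : Type*} (γ : X → Set Y) (ε : Y → Set Z) : X → Set Z :=
  fun x => ⋃ y ∈ γ x, ε y

/-- Decidability of a morphism w.r.t. chosen Booleans. -/
def IsDecidableMor {X Y : Type*} (T : PCAStruct Y) (γ : X → Set Y)
    (tX fX : X) (tY fY : Y) : Prop :=
  ∃ d : Y, (∀ b ∈ γ tX, T.app d b = Part.some tY) ∧
    (∀ b ∈ γ fX, T.app d b = Part.some fY)

/-- `rf` represents the partial function `f : X ⇀ X` w.r.t. `γ`. -/
def RepresentsPFun {X Y : Type*} (T : PCAStruct Y) (γ : X → Set Y)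
    (f : X → Option X) (rf : Y) : Prop :=
  ∀ a x, f a = some x → ∀ b ∈ γ a, ∃ c, c ∈ T.app rf b ∧ c ∈ γ x

/-- The pca `K₂(A)` on `A^A` (application via `a`-interrogations). -/
def K2 (mk : List A → A) (qp rp : A → A) : PCAStruct (A → A) where
  app α β := ⟨∀ a, ∃ c, phiA mk qp rp a α β c, fun h a => (h a).choose⟩

/-! ### Interrogations for partial functions -/

/-- Interrogation of a partial `β` by a partial `α`. -/
def PInterrog (mk : List A → A) (qp : A → A) (α β : A → Option A) (L : List A) : Prop :=
  ∀ j (hj : j < L.length), ∃ b, α (mk (L.take j)) = some (qp b) ∧ β b = some (L[j]'hj)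

/-- `φ_α(β) = c` for partial functions. -/
def phiPRel (mk : List A → A) (qp rp : A → A) (α β : A → Option A) (c : A) : Prop :=
  ∃ L, PInterrog mk qp α β L ∧ α (mk L) = some (rp c)

/-- `a`-interrogation of a partial `β` by a partial `α`. -/
def PAInterrog (mk : List A → A) (qp : A → A) (a : A) (α β : A → Option A)
    (L : List A) : Prop :=
  ∀ j (hj : j < L.length), ∃ b, α (mk (a :: L.take j)) = some (qp b) ∧ β b = some (L[j]'hj)

/-- `φ^a(α,β) = c` for partial functions. -/
def phiPA (mk : List A → A) (qp rp : A → A) (a : A) (α β : A → Option A) (c : A) : Prop :=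
  ∃ L, PAInterrog mk qp a α β L ∧ α (mk (a :: L)) = some (rp c)

/-- The (total!) application of `K₂^p(A)` on partial functions. -/
def K2pApp (mk : List A → A) (qp rp : A → A) (α β : A → Option A) : A → Option A :=
  fun a => if h : ∃ c, phiPA mk qp rp a α β c then some h.choose else none

/-- `K₂^p(A)` as a `PCAStruct` (with everywhere-defined application). -/
def K2p (mk : List A → A) (qp rp : A → A) : PCAStruct (A → Option A) :=
  ⟨fun α β => Part.some (K2pApp mk qp rp α β)⟩

/-! ### A pca with standard structure (Booleans, pairing, tuple coding, recursion) -/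

/-- A pca together with the standard derived structure: Booleans with a case
combinator, pairing, an injective standard tuple coding with combinators
manipulating it, and a fixed-point combinator. All of these exist in any
(nontrivial) pca. -/
structure StdPCA (A : Type u) where
  S : PCAStruct A
  isPCA : IsPCA S
  t : A
  f : A
  t_ne_f : t ≠ f
  Cc : A
  C_t : ∀ a b : A, pap S (pap S (S.app Cc t) (Part.some a)) (Part.some b) = Part.some a
  C_f : ∀ a b : A, pap S (pap S (S.app Cc f) (Part.some a)) (Part.some b) = Part.some b
  pairF : A → A → A
  Pc : A
  P0 : A
  P1 : A
  P_spec : ∀ x y : A, pap S (S.app Pc x) (Part.some y) = Part.some (pairF x y)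
  P0_spec : ∀ x y : A, S.app P0 (pairF x y) = Part.some x
  P1_spec : ∀ x y : A, S.app P1 (pairF x y) = Part.some y
  tup : List A → A
  tup_inj : Function.Injective tup
  CONS : A
  CONS_spec : ∀ (x : A) (L : List A),
    pap S (S.app CONS x) (Part.some (tup L)) = Part.some (tup (x :: L))
  SNOC : A
  SNOC_spec : ∀ (L : List A) (y : A),
    pap S (S.app SNOC (tup L)) (Part.some y) = Part.some (tup (L ++ [y]))
  Zc : A
  Z_spec : ∀ g : A, (S.app Zc g).Dom ∧ ∀ zg ∈ S.app Zc g, ∀ x : A,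
    S.app zg x = pap S (S.app g zg) (Part.some x)

/-- The partial function `x ↦ a·x` represented by `a ∈ A`. -/
def abar (P : StdPCA A) (a : A) : A → Option A :=
  fun x => if h : (P.S.app a x).Dom then some ((P.S.app a x).get h) else none

/-- An `x`-interrogation of the oracle `g : A ⇀ A` by `a ∈ A`, inside the pca. -/
def OInterrog (P : StdPCA A) (g : A → Option A) (a x : A) (L : List A) : Prop :=
  ∀ j (hj : j < L.length), ∃ v,
    P.S.app a (P.tup (x :: L.take j)) = Part.some (P.pairF P.f v) ∧ g v = some (L[j]'hj)

/-- The oracle application of `A[g]` : `a ·^g x = c`. -/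
def oapp (P : StdPCA A) (g : A → Option A) (a x c : A) : Prop :=
  ∃ L, OInterrog P g a x L ∧ P.S.app a (P.tup (x :: L)) = Part.some (P.pairF P.t c)

/-- `fn ≤_T g` : `fn` is representable in `A[g]`. -/
def leT (P : StdPCA A) (fn g : A → Option A) : Prop :=
  ∃ a : A, ∀ x y, fn x = some y → oapp P g a x y

/-- `j` is the join `f ⊔ g`. -/
def JoinSpec (P : StdPCA A) (f g j : A → Option A) : Prop :=
  (∀ x, j (P.pairF P.t x) = f x) ∧ (∀ x, j (P.pairF P.f x) = g x) ∧
  (∀ y, (∀ x, y ≠ P.pairF P.t x ∧ y ≠ P.pairF P.f x) → j y = none)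

/-- `K₂(A)` (built from the coding `mk`, `q`, `r`) is compatible with the pca
structure on `A`: elements of `A` translate between the codings and between
`q, r` and `⊥, ⊤`. -/
def CompatCoding (P : StdPCA A) (mk : List A → A) (q r : A) : Prop :=
  (∃ a : A, ∀ L, P.S.app a (mk L) = Part.some (P.tup L)) ∧
  (∃ b : A, ∀ L, P.S.app b (P.tup L) = Part.some (mk L)) ∧
  (∃ c : A, P.S.app c q = Part.some P.f ∧ P.S.app c r = Part.some P.t)

/-- Kleene application relation: `αβ(x) = y`. -/
def kphi (code : List ℕ → ℕ) (α β : ℕ → ℕ) (x y : ℕ) : Prop :=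
  ∃ n, α (code (x :: (List.range n).map β)) = y + 1 ∧
    ∀ j < n, α (code (x :: (List.range j).map β)) = 0

/-- Kleene's `K₂` on `ℕ^ℕ`. -/
def KleeneK2 (code : List ℕ → ℕ) : PCAStruct (ℕ → ℕ) :=
  ⟨fun α β => ⟨∀ x, ∃ y, kphi code α β x y, fun h x => (h x).choose⟩⟩

/-- `E₀ = ⟨⟩`, `E_{n+1} = ⟨E_n⟩`. -/
def Ecode (code : List ℕ → ℕ) : ℕ → ℕ
  | 0 => code []
  | n + 1 => code [Ecode code n]

/-!
Outside the codes `E_n`, a code `k'` or `s'` of `B` behaves like the usual combinator of `K₂`;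
at `E_n` it answers `n` at once, since the first query made on input `E_n` is `⟨E_n⟩ = E_{n+1}`.
The same remark shows that `αβ ∈ B` whenever `α ∈ B`. The combinators are built from a single
device: if `F β w` only reads `β` below a bound `M w` that does not depend on `β`, the code that
waits for `M w` oracle answers on input `w` and then outputs `F β w` maps `β` to `F β`, patched
at the `E_n`.

For `s'`, the function `s'αβ` computes `(αγ)(βγ)` from finite initial segments of `γ`: on a
segment of length `m` it runs the computations of `αγ` and `βγ` for at most `m` steps each, and
answers once the outer computation has finished. The positions at which `β` is read then depend
on the segment only, and, once `β` is fixed, so do those at which `α` is read: these are the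
bounds the machines for `s'α` and for `s'` need. To make `s'αβγ` diverge whenever `αγ` or `βγ`
does, the answer on input `x` also waits until the values of `αγ` and `βγ` up to `x` are known;
as infinitely many inputs are not `E`-codes, totality of `s'αβγ` forces that of `αγ` and `βγ`.
-/

open Set Filter Function

section

variable {code : List ℕ → ℕ}

def setB (code : List ℕ → ℕ) : Set (ℕ → ℕ) := {α | ∀ n, α (Ecode code n) = n}

lemma Ecode_injective (hcode : Injective code) : Injective (Ecode code) := by
  intro n m h
  induction n generalizing m with
  | zero =>
    cases m with
    | zero => rfl
    | succ m => exact absurd (hcode h) (by simp)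
  | succ n ih =>
    cases m with
    | zero => exact absurd (hcode h) (by simp)
    | succ m => exact congrArg _ (ih (by simpa using hcode h))

lemma code_cons_notMem_range_Ecode (hcode : Injective code) {x : ℕ}
    (hx : x ∉ range (Ecode code)) (L : List ℕ) : code (x :: L) ∉ range (Ecode code) := by
  rintro ⟨n, hn⟩
  cases n with
  | zero => exact absurd (hcode hn) (by simp)
  | succ n => exact hx ⟨n, (List.cons_eq_cons.1 (hcode hn)).1⟩

lemma exists_notMem_range_Ecode_gt (hcode : Injective code) (q : ℕ) :
    ∃ x, q < x ∧ x ∉ range (Ecode code) := by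
  have hinf : (range fun k => code [k, 0]).Infinite :=
    infinite_range_of_injective fun a b h => by simpa using hcode h
  obtain ⟨_, ⟨k, rfl⟩, hq⟩ := hinf.exists_gt q
  refine ⟨_, hq, ?_⟩
  rintro ⟨n, hn⟩
  cases n <;> simpa using hcode hn

/-- Value `n` at `E_n`, `f` elsewhere: the paper's passage from `k`, `s` to `k'`, `s'`. -/
def patchE (code : List ℕ → ℕ) (f : ℕ → ℕ) (z : ℕ) : ℕ :=
  (partialInv (Ecode code) z).getD (f z)

lemma patchE_Ecode (hcode : Injective code) (f : ℕ → ℕ) (n : ℕ) :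
    patchE code f (Ecode code n) = n := by
  simp [patchE, partialInv_left (Ecode_injective hcode)]

lemma patchE_mem_setB (hcode : Injective code) (f : ℕ → ℕ) : patchE code f ∈ setB code :=
  patchE_Ecode hcode f

lemma patchE_of_notMem {f : ℕ → ℕ} {z : ℕ} (hz : z ∉ range (Ecode code)) :
    patchE code f z = f z := by
  rw [patchE, partialInv, dif_neg (show ¬∃ n, Ecode code n = z from hz)]
  rfl

lemma patchE_eq_self (hcode : Injective code) {f : ℕ → ℕ} (hf : f ∈ setB code) :
    patchE code f = f := by
  funext z
  by_cases hz : z ∈ range (Ecode code)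
  · obtain ⟨n, rfl⟩ := hz
    rw [patchE_Ecode hcode, hf n]
  · exact patchE_of_notMem hz

lemma patchE_cases (z : ℕ) :
    (∃ n, ∀ f, patchE code f z = n) ∨ ∀ f, patchE code f z = f z := by
  unfold patchE
  rcases partialInv (Ecode code) z with _ | n
  · exact Or.inr fun _ => rfl
  · exact Or.inl ⟨n, fun _ => rfl⟩

/-! ### Kleene application -/

/-- `kphi code α β x y` is `∃ n, KphiAt code α β x y n` by definition. -/
def KphiAt (code : List ℕ → ℕ) (α β : ℕ → ℕ) (x y n : ℕ) : Prop :=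
  α (code (x :: (List.range n).map β)) = y + 1 ∧
    ∀ j < n, α (code (x :: (List.range j).map β)) = 0

lemma KphiAt.unique {α β : ℕ → ℕ} {x y y' n n' : ℕ} (h : KphiAt code α β x y n)
    (h' : KphiAt code α β x y' n') : y = y' := by
  obtain ⟨hn, hn0⟩ := h
  obtain ⟨hm, hm0⟩ := h'
  rcases lt_trichotomy n n' with h | rfl | h
  · rw [hm0 n h] at hn; omega
  · rw [hn] at hm; omega
  · rw [hn0 n' h] at hm; omega

lemma kphi_unique {α β : ℕ → ℕ} {x y y' : ℕ} (h : kphi code α β x y)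
    (h' : kphi code α β x y') : y = y' :=
  let ⟨_, h⟩ := h
  let ⟨_, h'⟩ := h'
  KphiAt.unique h h'

lemma map_range_congr {β β' : ℕ → ℕ} {n j : ℕ} (h : ∀ p < n, β p = β' p) (hj : j ≤ n) :
    (List.range j).map β = (List.range j).map β' :=
  List.map_congr_left fun p hp => h p ((List.mem_range.1 hp).trans_le hj)

lemma kphiAt_congr_right {α β β' : ℕ → ℕ} {x y n : ℕ} (h : ∀ p < n, β p = β' p) :
    KphiAt code α β x y n ↔ KphiAt code α β' x y n := by
  unfold KphiAt
  rw [map_range_congr h le_rfl]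
  exact and_congr_right' (forall₂_congr fun j hj => by rw [map_range_congr h hj.le])

lemma kphiAt_congr_left {α α' β : ℕ → ℕ} {x y n : ℕ}
    (h : ∀ j ≤ n, α (code (x :: (List.range j).map β)) = α' (code (x :: (List.range j).map β))) :
    KphiAt code α β x y n ↔ KphiAt code α' β x y n := by
  unfold KphiAt
  rw [h n le_rfl]
  exact and_congr_right' (forall₂_congr fun j hj => by rw [h j hj.le])

lemma mem_app_iff {α β γ : ℕ → ℕ} :
    γ ∈ (KleeneK2 code).app α β ↔ ∀ x, kphi code α β x (γ x) := by
  constructor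
  · rintro ⟨h, rfl⟩ x
    exact (h x).choose_spec
  · exact fun h => ⟨fun x => ⟨γ x, h x⟩, funext fun x => kphi_unique (Exists.choose_spec _) (h x)⟩

lemma app_eq_some {α β γ : ℕ → ℕ} (h : ∀ x, kphi code α β x (γ x)) :
    (KleeneK2 code).app α β = Part.some γ :=
  Part.eq_some_iff.2 (mem_app_iff.2 h)

lemma app_congr {α β α' β' : ℕ → ℕ} (h : ∀ x v, kphi code α β x v ↔ kphi code α' β' x v) :
    (KleeneK2 code).app α β = (KleeneK2 code).app α' β' :=
  Part.ext fun γ => by simp only [mem_app_iff, h]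

lemma pap_some {X : Type*} (S : PCAStruct X) (a b : X) :
    pap S (Part.some a) (Part.some b) = S.app a b := by
  simp [pap]

lemma dom_of_dom_pap {X : Type*} {S : PCAStruct X} {u v : Part X} (h : (pap S u v).Dom) :
    u.Dom ∧ v.Dom :=
  let ⟨hu, hv⟩ := h
  ⟨hu, hv.1⟩

lemma kphi_Ecode {α β : ℕ → ℕ} {n : ℕ} (h : α (Ecode code (n + 1)) = n + 1) :
    kphi code α β (Ecode code n) n :=
  ⟨0, h, by simp⟩

lemma kphi_Ecode_iff {α β : ℕ → ℕ} (hα : α ∈ setB code) {n v : ℕ} :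
    kphi code α β (Ecode code n) v ↔ v = n :=
  ⟨fun h => kphi_unique h (kphi_Ecode (hα _)), by rintro rfl; exact kphi_Ecode (hα _)⟩

lemma app_mem_setB {α β γ : ℕ → ℕ} (hα : α ∈ setB code)
    (hγ : γ ∈ (KleeneK2 code).app α β) : γ ∈ setB code :=
  fun _ => (kphi_Ecode_iff hα).1 (mem_app_iff.1 hγ _)

/-! ### Machines -/

def onCons (code : List ℕ → ℕ) (G : ℕ → List ℕ → ℕ) (w : ℕ) : ℕ :=
  match partialInv code w with
  | some (x :: L) => G x L
  | _ => 0

lemma onCons_code_cons (hcode : Injective code) {G : ℕ → List ℕ → ℕ} {x : ℕ} {L : List ℕ} :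
    onCons code G (code (x :: L)) = G x L := by
  simp [onCons, partialInv_left hcode]

lemma onCons_cases (w : ℕ) :
    (∀ G, onCons code G w = 0) ∨ ∃ x L, ∀ G, onCons code G w = G x L := by
  unfold onCons
  rcases partialInv code w with _ | _ | ⟨x, L⟩
  · exact Or.inl fun _ => rfl
  · exact Or.inl fun _ => rfl
  · exact Or.inr ⟨x, L, fun _ => rfl⟩

def Finitary {X : Type*} (G : (ℕ → ℕ) → X) : Prop :=
  ∃ s : Set ℕ, s.Finite ∧ DependsOn G s

lemma finitary_const {X : Type*} (c : X) : Finitary fun _ : ℕ → ℕ => c :=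
  ⟨∅, finite_empty, dependsOn_const c⟩

lemma Finitary.comp {X Y : Type*} {G : (ℕ → ℕ) → X} (hG : Finitary G) (f : X → Y) :
    Finitary fun β => f (G β) :=
  let ⟨s, hs, hG⟩ := hG
  ⟨s, hs, fun _ _ h => congrArg f (hG h)⟩

def useBound {X : Type*} (G : (ℕ → ℕ) → X) : ℕ := sInf {n | DependsOn G (Iio n)}

lemma Finitary.dependsOn_useBound {X : Type*} {G : (ℕ → ℕ) → X} (hG : Finitary G) :
    DependsOn G (Iio (useBound G)) := by
  obtain ⟨s, hs, hG⟩ := hG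
  obtain ⟨b, hb⟩ := hs.bddAbove
  exact Nat.sInf_mem (s := {n | DependsOn G (Iio n)}) ⟨b + 1, show DependsOn G (Iio (b + 1)) from
    hG.mono fun p hp => mem_Iio.2 (Nat.lt_succ_of_le (hb hp))⟩

/-- On input `w` the machine reads `M w` answers of the oracle, then outputs `F β w`. -/
def machine (code : List ℕ → ℕ) (F : (ℕ → ℕ) → ℕ → ℕ) (M : ℕ → ℕ) : ℕ → ℕ :=
  patchE code <| onCons code fun w seg =>
    if M w ≤ seg.length then F (fun p => seg.getD p 0) w + 1 else 0

lemma machine_mem_setB (hcode : Injective code) {F : (ℕ → ℕ) → ℕ → ℕ} {M : ℕ → ℕ} :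
    machine code F M ∈ setB code :=
  patchE_mem_setB hcode _

lemma getD_map_range {γ : ℕ → ℕ} {m p : ℕ} (h : p < m) :
    ((List.range m).map γ).getD p 0 = γ p := by
  simp [h]

lemma app_machine (hcode : Injective code) {F : (ℕ → ℕ) → ℕ → ℕ} {M : ℕ → ℕ}
    (hM : ∀ w, DependsOn (F · w) (Iio (M w))) (β : ℕ → ℕ) :
    (KleeneK2 code).app (machine code F M) β = Part.some (patchE code (F β)) := by
  refine app_eq_some fun x => ?_
  by_cases hx : x ∈ range (Ecode code)
  · obtain ⟨n, rfl⟩ := hx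
    rw [patchE_Ecode hcode]
    exact kphi_Ecode (machine_mem_setB hcode (n + 1))
  · have hquery : ∀ j, machine code F M (code (x :: (List.range j).map β)) =
        if M x ≤ j then F (fun p => ((List.range j).map β).getD p 0) x + 1 else 0 := fun j => by
      rw [machine, patchE_of_notMem (code_cons_notMem_range_Ecode hcode hx _),
        onCons_code_cons hcode, List.length_map, List.length_range]
    refine ⟨M x, ?_, fun j hj => ?_⟩
    · rw [hquery, if_pos le_rfl, patchE_of_notMem hx]
      exact congrArg (· + 1) (hM x fun p hp => getD_map_range hp)
    · rw [hquery, if_neg (by omega)]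

lemma finitary_machine {F : (ℕ → ℕ) → (ℕ → ℕ) → ℕ → ℕ} {M : ℕ → ℕ}
    (hF : ∀ β w, Finitary fun α => F α β w) (z : ℕ) :
    Finitary fun α => machine code (F α) M z := by
  rcases patchE_cases (code := code) z with ⟨n, h⟩ | h
  · simp only [machine, h]
    exact finitary_const n
  simp only [machine, h]
  rcases onCons_cases (code := code) z with h' | ⟨w, seg, h'⟩
  · simp only [h']
    exact finitary_const 0
  simp only [h']
  split_ifs
  · exact (hF _ w).comp (· + 1)
  · exact finitary_const 0

/-! ### The combinator `k'` -/

def kFun (code : List ℕ → ℕ) (α : ℕ → ℕ) : ℕ → ℕ := onCons code fun x _ => α x + 1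

def kComb (code : List ℕ → ℕ) : ℕ → ℕ := machine code (kFun code) fun w => useBound (kFun code · w)

lemma finitary_kFun (w : ℕ) : Finitary (kFun code · w) := by
  rcases onCons_cases (code := code) w with h | ⟨x, L, h⟩
  · simp only [kFun, h]
    exact finitary_const 0
  · simp only [kFun, h]
    exact ⟨{x}, finite_singleton x, fun α α' h => congrArg (· + 1) (h x rfl)⟩

lemma app_kComb (hcode : Injective code) (α : ℕ → ℕ) :
    (KleeneK2 code).app (kComb code) α = Part.some (patchE code (kFun code α)) :=
  app_machine hcode (fun w => (finitary_kFun w).dependsOn_useBound) α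

lemma app_patchE_kFun (hcode : Injective code) {α : ℕ → ℕ} (hα : α ∈ setB code) (β : ℕ → ℕ) :
    (KleeneK2 code).app (patchE code (kFun code α)) β = Part.some α := by
  refine app_eq_some fun x => ⟨0, ?_, by simp⟩
  show patchE code (kFun code α) (code [x]) = α x + 1
  by_cases hx : x ∈ range (Ecode code)
  · obtain ⟨n, rfl⟩ := hx
    exact (patchE_Ecode hcode _ (n + 1)).trans (congrArg (· + 1) (hα n).symm)
  · rw [patchE_of_notMem (code_cons_notMem_range_Ecode hcode hx []), kFun,
      onCons_code_cons hcode]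

/-! ### Running `(αγ)(βγ)` on an initial segment of `γ` -/

def KphiWithin (code : List ℕ → ℕ) (α γ : ℕ → ℕ) (q v m : ℕ) : Prop :=
  ∃ n ≤ m, KphiAt code α γ q v n

lemma KphiWithin.kphi {α γ : ℕ → ℕ} {q v m : ℕ} (h : KphiWithin code α γ q v m) :
    kphi code α γ q v :=
  let ⟨n, _, h⟩ := h
  ⟨n, h⟩

lemma kphi.eventually_kphiWithin {α γ : ℕ → ℕ} {q v : ℕ} (h : kphi code α γ q v) :
    ∀ᶠ m in atTop, KphiWithin code α γ q v m :=
  let ⟨n, h⟩ := h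
  eventually_atTop.2 ⟨n, fun _ hm => ⟨n, hm, h⟩⟩

lemma kphiWithin_congr_right {α γ γ' : ℕ → ℕ} {q v m : ℕ} (h : ∀ p < m, γ p = γ' p) :
    KphiWithin code α γ q v m ↔ KphiWithin code α γ' q v m :=
  exists_congr fun _ => and_congr_right fun hn =>
    kphiAt_congr_right fun p hp => h p (hp.trans_le hn)

/-- The codes at which `α` is read when computing `α·γ` on inputs in `Q` for at most `m` steps. -/
def queries (code : List ℕ → ℕ) (γ : ℕ → ℕ) (Q : Set ℕ) (m : ℕ) : Set ℕ :=
  image2 (fun q k => code (q :: (List.range k).map γ)) Q (Iic m)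

lemma kphiWithin_congr_left {α α' γ : ℕ → ℕ} {Q : Set ℕ} {q v m : ℕ}
    (h : ∀ p ∈ queries code γ Q m, α p = α' p) (hq : q ∈ Q) :
    KphiWithin code α γ q v m ↔ KphiWithin code α' γ q v m :=
  exists_congr fun _ => and_congr_right fun hn =>
    kphiAt_congr_left fun _ hj => h _ (mem_image2_of_mem hq (hj.trans hn))

/-- `(αγ)(βγ)(x) = y` after `n` steps, each value of `αγ` and `βγ` involved being computed within
`m` steps; the values of `αγ` and `βγ` up to `x` must be known within `m` steps as well. -/
def SimAt (code : List ℕ → ℕ) (α β γ : ℕ → ℕ) (x m y n : ℕ) : Prop :=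
  n ≤ m ∧ (∀ j ≤ x, (∃ v, KphiWithin code α γ j v m) ∧ ∃ v, KphiWithin code β γ j v m) ∧
    ∃ b : ℕ → ℕ, (∀ j < n, KphiWithin code β γ j (b j) m) ∧
      KphiWithin code α γ (code (x :: (List.range n).map b)) (y + 1) m ∧
      ∀ j < n, KphiWithin code α γ (code (x :: (List.range j).map b)) 0 m

def sim (code : List ℕ → ℕ) (α β γ : ℕ → ℕ) (x m : ℕ) : ℕ :=
  if ∃ y n, SimAt code α β γ x m y n then sInf {y | ∃ n, SimAt code α β γ x m y n} + 1 else 0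

section SimAt

variable {α β γ a b : ℕ → ℕ} {x m y n : ℕ}

lemma SimAt.exists_kphi (h : SimAt code α β γ x m y n) {j : ℕ} (hj : j ≤ x) :
    (∃ v, kphi code α γ j v) ∧ ∃ v, kphi code β γ j v :=
  let ⟨⟨v, hv⟩, ⟨w, hw⟩⟩ := h.2.1 j hj
  ⟨⟨v, hv.kphi⟩, ⟨w, hw.kphi⟩⟩

lemma SimAt.kphiAt (hA : ∀ q, kphi code α γ q (a q)) (hB : ∀ q, kphi code β γ q (b q))
    (h : SimAt code α β γ x m y n) : KphiAt code a b x y n := by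
  obtain ⟨-, -, b', hb', hy, h0⟩ := h
  rw [← kphiAt_congr_right fun p hp => kphi_unique (hb' p hp).kphi (hB p)]
  exact ⟨(kphi_unique hy.kphi (hA _)).symm, fun j hj => (kphi_unique (h0 j hj).kphi (hA _)).symm⟩

lemma exists_simAt (hA : ∀ q, kphi code α γ q (a q)) (hB : ∀ q, kphi code β γ q (b q))
    (h : KphiAt code a b x y n) : ∃ m, SimAt code α β γ x m y n := by
  obtain ⟨hy, h0⟩ := h
  have hknown : ∀ᶠ m in atTop, ∀ j ∈ Iic x,
      KphiWithin code α γ j (a j) m ∧ KphiWithin code β γ j (b j) m :=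
    (eventually_all_finite (finite_Iic x)).2 fun j _ =>
      (hA j).eventually_kphiWithin.and (hB j).eventually_kphiWithin
  have hinner : ∀ᶠ m in atTop, ∀ j ∈ Iio n, KphiWithin code β γ j (b j) m :=
    (eventually_all_finite (finite_Iio n)).2 fun j _ => (hB j).eventually_kphiWithin
  have houter : ∀ᶠ m in atTop, ∀ j ∈ Iic n, KphiWithin code α γ (code (x :: (List.range j).map b))
      (a (code (x :: (List.range j).map b))) m :=
    (eventually_all_finite (finite_Iic n)).2 fun j _ => (hA _).eventually_kphiWithin
  obtain ⟨m, hnm, hk, hb, ha⟩ :=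
    ((eventually_ge_atTop n).and (hknown.and (hinner.and houter))).exists
  refine ⟨m, hnm, fun j hj => ⟨⟨_, (hk j hj).1⟩, _, (hk j hj).2⟩, b, hb, ?_, fun j hj => ?_⟩
  · exact hy ▸ ha n (mem_Iic.2 le_rfl)
  · exact h0 j hj ▸ ha j (mem_Iic.2 hj.le)

lemma simAt_of_sim_eq_succ (h : sim code α β γ x m = y + 1) : ∃ n, SimAt code α β γ x m y n := by
  unfold sim at h
  split_ifs at h with hne
  obtain rfl : sInf {y | ∃ n, SimAt code α β γ x m y n} = y := by omega
  exact Nat.sInf_mem hne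

lemma sim_ne_zero (h : SimAt code α β γ x m y n) : sim code α β γ x m ≠ 0 := by
  rw [sim, if_pos ⟨y, n, h⟩]
  omega

lemma kphi_of_sim_eq_succ (hA : ∀ q, kphi code α γ q (a q)) (hB : ∀ q, kphi code β γ q (b q))
    (h : sim code α β γ x m = y + 1) : kphi code a b x y :=
  let ⟨n, hn⟩ := simAt_of_sim_eq_succ h
  ⟨n, hn.kphiAt hA hB⟩

lemma exists_sim_eq_succ (hA : ∀ q, kphi code α γ q (a q)) (hB : ∀ q, kphi code β γ q (b q))
    (h : kphi code a b x y) : ∃ m, sim code α β γ x m = y + 1 := by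
  obtain ⟨n, hn⟩ := h
  obtain ⟨m, hm⟩ := exists_simAt hA hB hn
  obtain ⟨y', hy'⟩ := Nat.exists_eq_succ_of_ne_zero (sim_ne_zero hm)
  exact ⟨m, hy'.trans (congrArg (· + 1) (kphi_unique (kphi_of_sim_eq_succ hA hB hy') ⟨n, hn⟩))⟩

end SimAt

lemma exists_first_eq_succ {f : ℕ → ℕ} {v : ℕ} (hf : ∀ n w, f n = w + 1 → w = v)
    (h : ∃ n, f n = v + 1) : ∃ n, f n = v + 1 ∧ ∀ j < n, f j = 0 := by
  have h' : ∃ n, f n ≠ 0 := let ⟨n, hn⟩ := h; ⟨n, by omega⟩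
  refine ⟨Nat.find h', ?_, fun j hj => by simpa using Nat.find_min h' hj⟩
  obtain ⟨w, hw⟩ := Nat.exists_eq_succ_of_ne_zero (Nat.find_spec h')
  rw [hw, hf _ _ hw]

section Congr

variable {α α' β β' γ : ℕ → ℕ} {x m : ℕ}

lemma sim_congr {γ' : ℕ → ℕ}
    (h : ∀ y n, SimAt code α β γ x m y n ↔ SimAt code α' β' γ' x m y n) :
    sim code α β γ x m = sim code α' β' γ' x m := by
  simp only [sim, h]

lemma simAt_congr {y n : ℕ}
    (hα : ∀ q ≤ x, ∀ v, KphiWithin code α γ q v m ↔ KphiWithin code α' γ q v m)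
    (hβ : ∀ j ≤ x + m, ∀ v, KphiWithin code β γ j v m ↔ KphiWithin code β' γ j v m)
    (hαb : ∀ b : ℕ → ℕ, ∀ j ≤ m, (∀ i < j, KphiWithin code β γ i (b i) m) → ∀ v,
      KphiWithin code α γ (code (x :: (List.range j).map b)) v m ↔
        KphiWithin code α' γ (code (x :: (List.range j).map b)) v m) :
    SimAt code α β γ x m y n ↔ SimAt code α' β' γ x m y n := by
  refine and_congr_right fun hn => and_congr (forall₂_congr fun j hj =>
    and_congr (exists_congr (hα j hj)) (exists_congr (hβ j (by omega)))) (exists_congr fun b => ?_)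
  rw [← forall₂_congr fun j (hj : j < n) => hβ j (by omega) (b j)]
  exact and_congr_right fun hb => and_congr (hαb b n hn hb _)
    (forall₂_congr fun j hj => hαb b j (by omega) (fun i hi => hb i (by omega)) 0)

lemma finitary_sim_right : Finitary fun β α => sim code α β γ x m :=
  ⟨queries code γ (Iic (x + m)) m, (finite_Iic _).image2 _ (finite_Iic m),
    fun _ _ h => funext fun _ => sim_congr fun _ _ => simAt_congr (fun _ _ _ => Iff.rfl)
      (fun _ hj _ => kphiWithin_congr_left h hj) fun _ _ _ _ _ => Iff.rfl⟩

lemma finitary_sim_left : Finitary fun α => sim code α β γ x m := by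
  -- every oracle list `b` allowed in `SimAt` is an initial segment of `b₀`
  let b₀ : ℕ → ℕ := fun j => Classical.epsilon fun v => KphiWithin code β γ j v m
  have hb₀ : ∀ b : ℕ → ℕ, ∀ j, (∀ i < j, KphiWithin code β γ i (b i) m) →
      (List.range j).map b = (List.range j).map b₀ := fun b j hb =>
    map_range_congr (fun i hi =>
      kphi_unique (hb i hi).kphi (Classical.epsilon_spec (p := fun v => KphiWithin code β γ i v m)
        ⟨b i, hb i hi⟩).kphi) le_rfl
  refine ⟨queries code γ (Iic x ∪ (fun j => code (x :: (List.range j).map b₀)) '' Iic m) m,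
    ((finite_Iic x).union ((finite_Iic m).image _)).image2 _ (finite_Iic m),
    fun _ _ h => sim_congr fun _ _ =>
      simAt_congr (fun _ hq _ => kphiWithin_congr_left h (Or.inl hq)) (fun _ _ _ => Iff.rfl)
        fun b j hj hb _ => ?_⟩
  rw [hb₀ b j hb]
  exact kphiWithin_congr_left h (Or.inr ⟨j, hj, rfl⟩)

end Congr

/-! ### The combinator `s'` -/

/-- On a code `⟨x, γ 0, …, γ (m-1)⟩`, the function `s'αβ` outputs `sim α β γ x m`. -/
def tauFun (code : List ℕ → ℕ) (α β : ℕ → ℕ) : ℕ → ℕ :=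
  onCons code fun x L => sim code α β (fun p => L.getD p 0) x L.length

lemma tauFun_code_cons (hcode : Injective code) {α β γ : ℕ → ℕ} {x m : ℕ} :
    tauFun code α β (code (x :: (List.range m).map γ)) = sim code α β γ x m := by
  rw [tauFun, onCons_code_cons hcode, List.length_map, List.length_range]
  have h : ∀ p < m, ((List.range m).map γ).getD p 0 = γ p := fun _ => getD_map_range
  exact sim_congr fun _ _ => by simp only [SimAt, kphiWithin_congr_right h]

lemma finitary_tauFun_right (w : ℕ) : Finitary fun β α => tauFun code α β w := by
  rcases onCons_cases (code := code) w with h | ⟨x, L, h⟩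
  · simp only [tauFun, h]
    exact finitary_const _
  · simp only [tauFun, h]
    exact finitary_sim_right

lemma finitary_tauFun_left (β : ℕ → ℕ) (w : ℕ) : Finitary fun α => tauFun code α β w := by
  rcases onCons_cases (code := code) w with h | ⟨x, L, h⟩
  · simp only [tauFun, h]
    exact finitary_const _
  · simp only [tauFun, h]
    exact finitary_sim_left

def sFun (code : List ℕ → ℕ) (α : ℕ → ℕ) : ℕ → ℕ :=
  machine code (tauFun code α) fun w => useBound fun β α => tauFun code α β w

def sComb (code : List ℕ → ℕ) : ℕ → ℕ := machine code (sFun code) fun z => useBound (sFun code · z)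

lemma app_sFun (hcode : Injective code) (α β : ℕ → ℕ) :
    (KleeneK2 code).app (sFun code α) β = Part.some (patchE code (tauFun code α β)) :=
  app_machine hcode (fun w _ _ h => congrFun ((finitary_tauFun_right w).dependsOn_useBound h) α) β

lemma app_sComb (hcode : Injective code) (α : ℕ → ℕ) :
    (KleeneK2 code).app (sComb code) α = Part.some (sFun code α) := by
  have h := app_machine (F := sFun code) (M := fun z => useBound (sFun code · z)) hcode
    (fun z => (finitary_machine (F := tauFun code) finitary_tauFun_left z).dependsOn_useBound) α
  rwa [patchE_eq_self hcode (f := sFun code α) (machine_mem_setB hcode)] at h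

section Tau

variable {α β γ : ℕ → ℕ}

lemma kphi_patchE_tauFun_iff (hcode : Injective code) {x v : ℕ} (hx : x ∉ range (Ecode code)) :
    kphi code (patchE code (tauFun code α β)) γ x v ↔
      ∃ n, sim code α β γ x n = v + 1 ∧ ∀ j < n, sim code α β γ x j = 0 := by
  simp only [kphi, patchE_of_notMem (code_cons_notMem_range_Ecode hcode hx _),
    tauFun_code_cons hcode]

lemma dom_of_dom_app_patchE_tauFun (hcode : Injective code)
    (h : ((KleeneK2 code).app (patchE code (tauFun code α β)) γ).Dom) :
    ((KleeneK2 code).app α γ).Dom ∧ ((KleeneK2 code).app β γ).Dom := by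
  have key : ∀ q, (∃ v, kphi code α γ q v) ∧ ∃ v, kphi code β γ q v := by
    intro q
    obtain ⟨x, hqx, hx⟩ := exists_notMem_range_Ecode_gt hcode q
    obtain ⟨v, hv⟩ := h x
    obtain ⟨n, hn, -⟩ := (kphi_patchE_tauFun_iff hcode hx).1 hv
    obtain ⟨_, hsim⟩ := simAt_of_sim_eq_succ hn
    exact hsim.exists_kphi hqx.le
  exact ⟨fun q => (key q).1, fun q => (key q).2⟩

lemma kphi_patchE_tauFun_iff_of_mem (hcode : Injective code) (hα : α ∈ setB code) {a b : ℕ → ℕ}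
    (ha : a ∈ (KleeneK2 code).app α γ) (hb : b ∈ (KleeneK2 code).app β γ) (x v : ℕ) :
    kphi code (patchE code (tauFun code α β)) γ x v ↔ kphi code a b x v := by
  have hA := mem_app_iff.1 ha
  have hB := mem_app_iff.1 hb
  by_cases hx : x ∈ range (Ecode code)
  · obtain ⟨n, rfl⟩ := hx
    rw [kphi_Ecode_iff (patchE_mem_setB hcode _), kphi_Ecode_iff (app_mem_setB hα ha)]
  rw [kphi_patchE_tauFun_iff hcode hx]
  refine ⟨fun ⟨_, hn, _⟩ => kphi_of_sim_eq_succ hA hB hn, fun h => ?_⟩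
  exact exists_first_eq_succ (fun _ _ hw => kphi_unique (kphi_of_sim_eq_succ hA hB hw) h)
    (exists_sim_eq_succ hA hB h)

lemma app_patchE_tauFun (hcode : Injective code) (hα : α ∈ setB code) :
    (KleeneK2 code).app (patchE code (tauFun code α β)) γ =
      pap (KleeneK2 code) ((KleeneK2 code).app α γ) ((KleeneK2 code).app β γ) := by
  by_cases hdom : ((KleeneK2 code).app α γ).Dom ∧ ((KleeneK2 code).app β γ).Dom
  · obtain ⟨hA, hB⟩ := hdom
    rw [← Part.some_get hA, ← Part.some_get hB, pap_some]
    exact app_congr (kphi_patchE_tauFun_iff_of_mem hcode hα (Part.get_mem hA) (Part.get_mem hB))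
  · rw [Part.eq_none_iff'.2 fun h => hdom (dom_of_dom_app_patchE_tauFun hcode h),
      Part.eq_none_iff'.2 fun h => hdom (dom_of_dom_pap h)]

end Tau

end

/-- In Kleene's `K₂`, let `B = {α | ∀ n, α(E_n) = n}`. Then
(1) `B` is closed under application; (2) `B` contains `k'`, `s'` satisfying the
pca axioms for `B`; (3) `B` is a sub-pca not closed under `recursive in`: it
contains `γ` but omits some function computable (hence recursive in `γ`). -/
theorem statement13 (code : List ℕ → ℕ) (hcode : Function.Injective code) :
    let B : Set (ℕ → ℕ) := {α | ∀ n, α (Ecode code n) = n}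
    let K := KleeneK2 code
    (∀ α ∈ B, ∀ β γ : ℕ → ℕ, γ ∈ K.app α β → γ ∈ B) ∧
    (∃ k' ∈ B, ∃ s' ∈ B,
      (∀ α ∈ B, ∀ β ∈ B, pap K (K.app k' α) (Part.some β) = Part.some α) ∧
      (∀ α ∈ B, ∀ β ∈ B, (pap K (K.app s' α) (Part.some β)).Dom) ∧
      (∀ α ∈ B, ∀ β ∈ B, ∀ γ ∈ B,
        pap K (pap K (K.app s' α) (Part.some β)) (Part.some γ)
          = pap K (K.app α γ) (K.app β γ))) ∧
    (∃ γ ∈ B, ∃ β : ℕ → ℕ, Computable β ∧ β ∉ B) := by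
  intro B K
  refine ⟨fun α hα β γ hγ => app_mem_setB hα hγ,
    ⟨kComb code, machine_mem_setB hcode, sComb code, machine_mem_setB hcode,
      fun α hα β _ => ?_, fun α _ β _ => ?_, fun α hα β _ γ _ => ?_⟩,
    kComb code, machine_mem_setB hcode, fun _ => 0, Computable.const 0, fun h => ?_⟩
  · rw [app_kComb hcode, pap_some, app_patchE_kFun hcode hα]
  · rw [app_sComb hcode, pap_some, app_sFun hcode]
    trivial
  · rw [app_sComb hcode, pap_some, app_sFun hcode, pap_some, app_patchE_tauFun hcode hα]
  · simpa using h 1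

end OostenK2
end
end

section
/- A partial function Ptl(A,A) ⇀ A is of the form φ_α for some partial function α ∈ Ptl(A,A) if and only if it is partial sequential in the generalized sense (allowing non-total sequential trees T and partial maps F from leaves of T to A). -/
open Classical

noncomputable section

namespace OostenK2

universe u

variable {A : Type u}

/-! Interrogation by `α` is deterministic: two interrogations of the same partial `β` are
comparable under the prefix order. Hence the graphs `{(query, answer)}` of finite interrogations
form a sequential tree: all immediate successors of a node `p` add the same argument, the first
query outside `dom p` that `α` asks while interrogating `p` itself, and a leaf `v` is labelled by
`φ_α(v)`. Conversely, a sequential tree `(T, F)` is simulated by the oracle that reads the code of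
`[b₀, …, bₙ₋₁]` as the path from the root on which the successive queries are answered by the `bᵢ`,
and returns the query of the node reached, or `⟨r, F v⟩` at a leaf `v`. -/

lemma FPF.mem_dom {p : FPF A} {a : A} : a ∈ FPF.dom p ↔ ∃ b, (a, b) ∈ p.val := by
  simp [FPF.dom]

lemma FPF.finite_Iic (v : FPF A) : (Set.Iic v).Finite :=
  v.2.2.finite_subsets.preimage Subtype.val_injective.injOn

lemma FPF.val_eq_insert {p p' : FPF A} {a b : A} (hle : p ≤ p')
    (hdom : FPF.dom p' = insert a (FPF.dom p)) (hab : (a, b) ∈ p'.val) :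
    p'.val = insert (a, b) p.val := by
  ext ⟨x, y⟩
  refine ⟨fun hxy => ?_, ?_⟩
  · have hx : x ∈ FPF.dom p' := FPF.mem_dom.2 ⟨y, hxy⟩
    rw [hdom, Set.mem_insert_iff, FPF.mem_dom] at hx
    rcases hx with rfl | ⟨y', hy'⟩
    · exact Or.inl (by rw [p'.2.1 hxy hab])
    · exact Or.inr (by rwa [p'.2.1 hxy (hle hy')])
  · rintro (h | h)
    · rwa [h]
    · exact hle h

lemma exists_immSucc_of_lt {T : Set (FPF A)} {t v : FPF A} (ht : t ∈ T) (hv : v ∈ T)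
    (htv : t < v) : ∃ m ∈ T, ImmSucc T m v := by
  have hfin : {m | m ∈ T ∧ m < v}.Finite := (FPF.finite_Iic v).subset fun _ hm => hm.2.le
  obtain ⟨m, hm⟩ := hfin.exists_maximal ⟨t, ht, htv⟩
  exact ⟨m, hm.1.1, hv, hm.1.2,
    fun ⟨s, hs, hms, hsv⟩ => hms.not_ge (hm.2 ⟨hs, hsv⟩ hms.le)⟩


def FPF.toFun (p : FPF A) (a : A) : Option A :=
  if h : ∃ b, (a, b) ∈ p.val then some h.choose else none

lemma FPF.toFun_eq_some {p : FPF A} {a b : A} : p.toFun a = some b ↔ (a, b) ∈ p.val := by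
  unfold FPF.toFun
  split_ifs with h
  · exact ⟨fun e => Option.some.inj e ▸ h.choose_spec,
      fun hab => congrArg some (p.2.1 h.choose_spec hab)⟩
  · simpa using fun hab => h ⟨b, hab⟩

lemma FPF.toFun_eq_none {p : FPF A} {a : A} : p.toFun a = none ↔ a ∉ FPF.dom p := by
  rw [FPF.mem_dom, ← Option.not_isSome_iff_eq_none, Option.isSome_iff_exists]
  simp only [FPF.toFun_eq_some]

lemma FPF.toFun_mono {p p' : FPF A} (h : p ≤ p') ⦃a b : A⦄ (hab : p.toFun a = some b) :
    p'.toFun a = some b :=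
  FPF.toFun_eq_some.2 (h (FPF.toFun_eq_some.1 hab))

lemma agreesP_iff_toFun {β : A → Option A} {p : FPF A} :
    agreesP β p ↔ ∀ ⦃a b⦄, p.toFun a = some b → β a = some b := by
  simp only [agreesP, FPF.toFun_eq_some]

section Interrogations

variable {mk : List A → A} {qp rp : A → A} {α β γ : A → Option A} {L L' : List A}

lemma pInterrog_nil : PInterrog mk qp α β [] := fun _ hj => absurd hj (Nat.not_lt_zero _)

lemma pInterrog_take_iff (n : ℕ) :
    PInterrog mk qp α β (L.take n) ↔
      ∀ j (hj : j < L.length), j < n →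
        ∃ b, α (mk (L.take j)) = some (qp b) ∧ β b = some L[j] := by
  constructor
  · intro h j hj hjn
    obtain ⟨b, hb, hβ⟩ := h j (by simp [hj, hjn])
    rw [List.take_take, min_eq_left hjn.le] at hb
    exact ⟨b, hb, by rwa [List.getElem_take] at hβ⟩
  · intro h j hj
    simp only [List.length_take, lt_min_iff] at hj
    simpa [List.take_take, hj.1.le] using h j hj.2 hj.1

lemma PInterrog.of_prefix (hL' : PInterrog mk qp α β L') (h : L <+: L') :
    PInterrog mk qp α β L := by
  rw [List.prefix_iff_eq_take.1 h, pInterrog_take_iff]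
  exact fun j hj _ => hL' j hj

lemma PInterrog.mono (hL : PInterrog mk qp α γ L)
    (h : ∀ ⦃a b⦄, γ a = some b → β a = some b) : PInterrog mk qp α β L :=
  fun j hj => (hL j hj).imp fun _ hb => ⟨hb.1, h hb.2⟩

lemma PInterrog.query_of_prefix (hL' : PInterrog mk qp α β L') (h : L <+: L') (hne : L ≠ L') :
    ∃ a c, α (mk L) = some (qp a) ∧ β a = some c := by
  have hlt : L.length < L'.length := lt_of_le_of_ne h.length_le fun e => hne (h.eq_of_length e)
  obtain ⟨a, ha, hc⟩ := hL' L.length hlt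
  rw [← List.prefix_iff_eq_take.1 h] at ha
  exact ⟨a, _, ha, hc⟩

lemma PInterrog.prefix_or_prefix (hqp : Function.Injective qp) (hL : PInterrog mk qp α β L)
    (hL' : PInterrog mk qp α β L') : L <+: L' ∨ L' <+: L := by
  have key : ∀ n, n ≤ L.length → n ≤ L'.length → L.take n = L'.take n := by
    intro n
    induction n with
    | zero => simp
    | succ n ih =>
      intro h h'
      have htake := ih (by omega) (by omega)
      obtain ⟨a, ha, hb⟩ := hL n (by omega)
      obtain ⟨a', ha', hb'⟩ := hL' n (by omega)
      rw [htake, ha'] at ha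
      obtain rfl := hqp (Option.some.inj ha).symm
      rw [← List.take_append_getElem (by omega), ← List.take_append_getElem (by omega), htake,
        Option.some.inj (hb.symm.trans hb')]
  rcases le_total L.length L'.length with h | h
  · exact Or.inl (List.prefix_iff_eq_take.2 (by simpa using key _ le_rfl h))
  · exact Or.inr (List.prefix_iff_eq_take.2 (by simpa using (key _ h le_rfl).symm))

lemma PInterrog.eq_of_unanswered (hqp : Function.Injective qp) (hL : PInterrog mk qp α β L)
    (hL' : PInterrog mk qp α β L') (h : ∀ a, α (mk L) = some (qp a) → β a = none)
    (h' : ∀ a, α (mk L') = some (qp a) → β a = none) : L = L' := by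
  by_contra hne
  rcases hL.prefix_or_prefix hqp hL' with hp | hp
  · obtain ⟨a, c, ha, hc⟩ := hL'.query_of_prefix hp hne
    simp [h a ha] at hc
  · obtain ⟨a, c, ha, hc⟩ := hL.query_of_prefix hp (Ne.symm hne)
    simp [h' a ha] at hc

lemma phiPRel_unique (hqp : Function.Injective qp) (hrp : Function.Injective rp)
    (hqr : ∀ a c, qp a ≠ rp c) {c c' : A} (h : phiPRel mk qp rp α β c)
    (h' : phiPRel mk qp rp α β c') : c = c' := by
  obtain ⟨L, hL, hc⟩ := h
  obtain ⟨L', hL', hc'⟩ := h'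
  have unanswered :
      ∀ {L c}, α (mk L) = some (rp c) → ∀ a, α (mk L) = some (qp a) → β a = none :=
    fun h a ha => absurd (Option.some.inj (ha.symm.trans h)) (hqr a _)
  obtain rfl := hL.eq_of_unanswered hqp hL' (unanswered hc) (unanswered hc')
  exact hrp (Option.some.inj (hc.symm.trans hc'))

lemma PInterrog.exists_exit (hL : PInterrog mk qp α β L)
    (hγβ : ∀ ⦃a b⦄, γ a = some b → β a = some b) (hnot : ¬PInterrog mk qp α γ L) :
    ∃ n, ∃ hn : n < L.length, PInterrog mk qp α γ (L.take n) ∧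
      ∃ a, α (mk (L.take n)) = some (qp a) ∧ γ a = none ∧ β a = some L[n] := by
  have hex : ∃ n, ∃ hn : n < L.length,
      ¬∃ b, α (mk (L.take n)) = some (qp b) ∧ γ b = some L[n] := by
    simpa [PInterrog] using hnot
  obtain ⟨hn, hfail⟩ := Nat.find_spec hex
  refine ⟨Nat.find hex, hn, (pInterrog_take_iff _).2 fun j hj hjn => ?_, ?_⟩
  · simpa [hj] using Nat.find_min hex hjn
  · obtain ⟨a, ha, hb⟩ := hL _ hn
    refine ⟨a, ha, ?_, hb⟩
    cases hγ : γ a with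
    | none => rfl
    | some c => exact absurd ⟨a, ha, by rw [hγ, ← hb, hγβ hγ]⟩ hfail

end Interrogations

section InterrogTree

variable {mk : List A → A} {qp rp : A → A} {α β γ : A → Option A} {L L' : List A}

def queryGraph (mk : List A → A) (qp : A → A) (α : A → Option A) (L : List A) :
    Set (A × A) :=
  {x | ∃ j, ∃ hj : j < L.length, α (mk (L.take j)) = some (qp x.1) ∧ x.2 = L[j]}

lemma mem_queryGraph {a b : A} :
    (a, b) ∈ queryGraph mk qp α L ↔
      ∃ j, ∃ hj : j < L.length, α (mk (L.take j)) = some (qp a) ∧ b = L[j] :=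
  Iff.rfl

lemma queryGraph_nil : queryGraph mk qp α [] = ∅ := by
  simp [queryGraph]

lemma queryGraph_mono (h : L <+: L') : queryGraph mk qp α L ⊆ queryGraph mk qp α L' := by
  rintro ⟨a, b⟩ hab
  obtain ⟨j, hj, ha, rfl⟩ := mem_queryGraph.1 hab
  have hjL' : j < L'.length := lt_of_lt_of_le hj h.length_le
  refine ⟨j, hjL', ?_, h.getElem hj⟩
  rwa [List.prefix_iff_eq_take.1 h, List.take_take, min_eq_left hj.le] at ha

lemma queryGraph_append_singleton (hqp : Function.Injective qp) {a b : A}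
    (ha : α (mk L) = some (qp a)) :
    queryGraph mk qp α (L ++ [b]) = insert (a, b) (queryGraph mk qp α L) := by
  ext ⟨x, y⟩
  simp only [mem_queryGraph, Set.mem_insert_iff, Prod.mk.injEq, List.length_append,
    List.length_singleton]
  constructor
  · rintro ⟨j, hj, hx, rfl⟩
    rcases Nat.lt_succ_iff_lt_or_eq.1 hj with hj | rfl
    · exact Or.inr ⟨j, hj, by simpa [List.take_append_of_le_length hj.le] using hx,
        List.getElem_append_left hj⟩
    · simp only [List.take_left, ha, Option.some.injEq] at hx
      exact Or.inl ⟨hqp hx.symm, by simp⟩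
  · rintro (⟨rfl, rfl⟩ | ⟨j, hj, hx, rfl⟩)
    · exact ⟨L.length, by omega, by simpa using ha, by simp⟩
    · exact ⟨j, by omega, by simpa [List.take_append_of_le_length hj.le] using hx,
        (List.getElem_append_left hj).symm⟩

lemma queryGraph_finite (hqp : Function.Injective qp) : (queryGraph mk qp α L).Finite := by
  let S (j : Fin L.length) : Set (A × A) := {x | α (mk (L.take j)) = some (qp x.1) ∧ x.2 = L[j]}
  have hS : ∀ j, (S j).Subsingleton := by
    rintro j ⟨a, b⟩ ⟨ha, hb⟩ ⟨a', b'⟩ ⟨ha', hb'⟩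
    obtain rfl := hqp (Option.some.inj (ha.symm.trans ha'))
    exact Prod.ext rfl (hb.trans hb'.symm)
  exact (Set.finite_iUnion fun j => (hS j).finite).subset
    fun x ⟨j, hj, hx⟩ => Set.mem_iUnion.2 ⟨⟨j, hj⟩, hx⟩

lemma PInterrog.eq_some_of_mem_queryGraph (hqp : Function.Injective qp)
    (hL : PInterrog mk qp α β L) ⦃a b : A⦄ (hab : (a, b) ∈ queryGraph mk qp α L) : β a = some b := by
  obtain ⟨j, hj, ha, rfl⟩ := mem_queryGraph.1 hab
  obtain ⟨a', ha', hb⟩ := hL j hj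
  rwa [hqp (Option.some.inj (ha.symm.trans ha'))]

lemma PInterrog.of_queryGraph (hL : PInterrog mk qp α β L)
    (h : ∀ ⦃a b⦄, (a, b) ∈ queryGraph mk qp α L → γ a = some b) :
    PInterrog mk qp α γ L :=
  fun j hj => (hL j hj).imp fun _ hb => ⟨hb.1, h ⟨j, hj, hb.1, rfl⟩⟩

variable (mk qp rp α)

def interrogTree : Set (FPF A) :=
  {p | ∃ L, PInterrog mk qp α p.toFun L ∧ queryGraph mk qp α L = p.val}

def interrogResult (p : FPF A) : Option A :=
  if h : ∃ c, phiPRel mk qp rp α p.toFun c then some h.choose else none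

variable {mk qp rp α}

lemma interrogResult_eq_some (hqp : Function.Injective qp) (hrp : Function.Injective rp)
    (hqr : ∀ a c, qp a ≠ rp c) {p : FPF A} {c : A} :
    interrogResult mk qp rp α p = some c ↔ phiPRel mk qp rp α p.toFun c := by
  unfold interrogResult
  split_ifs with h
  · rw [Option.some.injEq]
    exact ⟨fun e => e ▸ h.choose_spec, phiPRel_unique hqp hrp hqr h.choose_spec⟩
  · simpa using fun hc => h ⟨c, hc⟩

lemma PInterrog.exists_mem_interrogTree (hqp : Function.Injective qp)
    (hL : PInterrog mk qp α β L) :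
    ∃ v ∈ interrogTree mk qp α, v.val = queryGraph mk qp α L :=
  let v : FPF A := ⟨queryGraph mk qp α L,
    fun _ _ _ h h' => Option.some.inj ((hL.eq_some_of_mem_queryGraph hqp h).symm.trans
      (hL.eq_some_of_mem_queryGraph hqp h')), queryGraph_finite hqp⟩
  ⟨v, ⟨L, hL.of_queryGraph fun _ _ h => FPF.toFun_eq_some.2 h, rfl⟩, rfl⟩

lemma isTreeOn_interrogTree (hqp : Function.Injective qp) :
    IsTreeOn (FPF.empty A) (interrogTree mk qp α) := by
  refine ⟨⟨[], pInterrog_nil, queryGraph_nil⟩, fun _ _ => Set.empty_subset _, fun _ _ => ?_⟩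
  rintro t ⟨⟨L, hL, hLt⟩, ht⟩ t' ⟨⟨L', hL', hLt'⟩, ht'⟩ -
  rcases (hL.mono (FPF.toFun_mono ht)).prefix_or_prefix hqp (hL'.mono (FPF.toFun_mono ht'))
    with h | h
  · exact Or.inl (show t.val ⊆ t'.val from hLt ▸ hLt' ▸ queryGraph_mono h)
  · exact Or.inr (show t'.val ⊆ t.val from hLt ▸ hLt' ▸ queryGraph_mono h)

def IsNextQuery (mk : List A → A) (qp : A → A) (α : A → Option A) (p : FPF A) (a : A) :
    Prop :=
  a ∉ FPF.dom p ∧ ∃ N, PInterrog mk qp α p.toFun N ∧ α (mk N) = some (qp a)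

lemma IsNextQuery.unique (hqp : Function.Injective qp) {p : FPF A} {a a' : A}
    (h : IsNextQuery mk qp α p a) (h' : IsNextQuery mk qp α p a') : a = a' := by
  obtain ⟨ha, N, hN, hNa⟩ := h
  obtain ⟨ha', N', hN', hNa'⟩ := h'
  have unanswered : ∀ {N a}, a ∉ FPF.dom p → α (mk N) = some (qp a) →
      ∀ b, α (mk N) = some (qp b) → p.toFun b = none := fun ha hNa b hb =>
    FPF.toFun_eq_none.2 (hqp (Option.some.inj (hNa.symm.trans hb)) ▸ ha)
  obtain rfl := hN.eq_of_unanswered hqp hN' (unanswered ha hNa) (unanswered ha' hNa')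
  exact hqp (Option.some.inj (hNa.symm.trans hNa'))

lemma exists_isNextQuery_of_lt (hqp : Function.Injective qp) {p p' : FPF A}
    (hp : p ∈ interrogTree mk qp α) (hp' : p' ∈ interrogTree mk qp α) (hlt : p < p') :
    ∃ a b, IsNextQuery mk qp α p a ∧
      ∃ w ∈ interrogTree mk qp α, w ≤ p' ∧ w.val = insert (a, b) p.val := by
  obtain ⟨L, hL, hLp⟩ := hp
  obtain ⟨L', hL', hLp'⟩ := hp'
  have hnot : ¬PInterrog mk qp α p.toFun L' := fun h =>
    hlt.not_ge (show p'.val ⊆ p.val from hLp' ▸ fun ⟨_, _⟩ hx =>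
      FPF.toFun_eq_some.1 (h.eq_some_of_mem_queryGraph hqp hx))
  obtain ⟨n, hn, hN, a, ha, hpa, -⟩ := hL'.exists_exit (FPF.toFun_mono hlt.le) hnot
  have hLN : L <+: L'.take n := by
    rcases hL.prefix_or_prefix hqp hN with h | h
    · exact h
    by_cases hNL : L'.take n = L
    · exact hNL ▸ List.prefix_refl L
    · obtain ⟨a', c, ha', hc⟩ := hL.query_of_prefix h hNL
      rw [ha, Option.some.injEq] at ha'
      simp [hqp ha' ▸ hpa] at hc
  have hGN : queryGraph mk qp α (L'.take n) = p.val :=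
    subset_antisymm (fun ⟨_, _⟩ hx => FPF.toFun_eq_some.1 (hN.eq_some_of_mem_queryGraph hqp hx))
      (hLp ▸ queryGraph_mono hLN)
  obtain ⟨w, hw, hwv⟩ :=
    (hL'.of_prefix (List.take_prefix (n + 1) L')).exists_mem_interrogTree hqp
  refine ⟨a, L'[n], ⟨FPF.toFun_eq_none.1 hpa, _, hN, ha⟩, w, hw, ?_, ?_⟩
  · exact show w.val ⊆ p'.val from hwv ▸ hLp' ▸ queryGraph_mono (List.take_prefix _ _)
  · rw [hwv, ← List.take_append_getElem hn, queryGraph_append_singleton hqp ha, hGN]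

lemma isSeqTree_interrogTree (hqp : Function.Injective qp) :
    IsSeqTree (interrogTree mk qp α) := by
  refine ⟨isTreeOn_interrogTree hqp, fun p hp hleaf => ?_⟩
  obtain ⟨p', hp', hlt⟩ : ∃ p' ∈ interrogTree mk qp α, p < p' :=
    not_not.1 fun h => hleaf ⟨hp, h⟩
  obtain ⟨a, -, ha, -⟩ := exists_isNextQuery_of_lt hqp hp hp' hlt
  refine ⟨a, ha.1, fun p'' hsucc => ?_⟩
  obtain ⟨a', b, ha', w, hw, hwp'', hwv⟩ := exists_isNextQuery_of_lt hqp hp hsucc.1 hsucc.2.1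
  obtain rfl := ha'.unique hqp ha
  have hpw : p < w :=
    show p.val ⊂ w.val from
      hwv ▸ Set.ssubset_insert fun hab => ha.1 (FPF.mem_dom.2 ⟨b, hab⟩)
  obtain rfl : w = p'' := by
    by_contra hne
    exact hsucc.2.2 ⟨w, hw, hpw, lt_of_le_of_ne hwp'' hne⟩
  simp only [FPF.dom, hwv, Set.image_insert_eq]

theorem phiPRel_iff_interrogTree (hqp : Function.Injective qp) (hrp : Function.Injective rp)
    (hqr : ∀ a c, qp a ≠ rp c) {b : A} :
    phiPRel mk qp rp α β b ↔ ∃ v, IsLeaf (interrogTree mk qp α) v ∧ agreesP β v ∧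
      interrogResult mk qp rp α v = some b := by
  constructor
  · rintro ⟨L, hL, hLb⟩
    obtain ⟨v, hv, hvL⟩ := hL.exists_mem_interrogTree hqp
    have hLv : PInterrog mk qp α v.toFun L :=
      hL.of_queryGraph fun _ _ h => FPF.toFun_eq_some.2 (hvL ▸ h)
    refine ⟨v, ⟨hv, ?_⟩, fun _ _ h => hL.eq_some_of_mem_queryGraph hqp (hvL ▸ h),
      (interrogResult_eq_some hqp hrp hqr).2 ⟨L, hLv, hLb⟩⟩
    rintro ⟨p', ⟨L', hL', hLp'⟩, hlt⟩
    rcases (hLv.mono (FPF.toFun_mono hlt.le)).prefix_or_prefix hqp hL' with h | h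
    · by_cases hLL : L = L'
      · subst hLL
        exact hlt.ne (Subtype.ext (hvL.trans hLp'))
      · obtain ⟨a, c, ha, -⟩ := hL'.query_of_prefix h hLL
        exact hqr a b (Option.some.inj (ha.symm.trans hLb))
    · exact hlt.not_ge (show p'.val ⊆ v.val from hvL ▸ hLp' ▸ queryGraph_mono h)
  · rintro ⟨v, -, hβv, hvb⟩
    obtain ⟨L, hL, hLb⟩ := (interrogResult_eq_some hqp hrp hqr).1 hvb
    exact ⟨L, hL.mono (agreesP_iff_toFun.1 hβv), hLb⟩

end InterrogTree

section SeqTreeOracle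

variable [Nonempty A] (T : Set (FPF A))

/-- Junk at leaves and outside sequential trees. -/
def seqQuery (p : FPF A) : A :=
  Classical.epsilon fun a =>
    a ∉ FPF.dom p ∧ ∀ p', ImmSucc T p p' → FPF.dom p' = insert a (FPF.dom p)

def seqChild (p : FPF A) (b : A) : Option (FPF A) :=
  if h : ∃ p', ImmSucc T p p' ∧ (seqQuery T p, b) ∈ p'.val then some h.choose else none

def seqWalk (L : List A) : Option (FPF A) :=
  L.foldlM (seqChild T) (FPF.empty A)

def seqTreeOracle (mk : List A → A) (qp rp : A → A) (F : FPF A → Option A) : A → Option A :=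
  Function.extend mk
    (fun L => (seqWalk T L).bind fun p =>
      if IsLeaf T p then (F p).map rp else some (qp (seqQuery T p)))
    fun _ => none

variable {T} {p p' v : FPF A} {b : A} {L : List A}

lemma seqQuery_spec (hT : IsSeqTree T) (hp : p ∈ T) (hleaf : ¬IsLeaf T p) :
    seqQuery T p ∉ FPF.dom p ∧
      ∀ p', ImmSucc T p p' → FPF.dom p' = insert (seqQuery T p) (FPF.dom p) :=
  Classical.epsilon_spec (hT.2 p hp hleaf)

lemma ImmSucc.val_eq_insert (hT : IsSeqTree T) (hp : p ∈ T) (h : ImmSucc T p p')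
    (hb : (seqQuery T p, b) ∈ p'.val) : p'.val = insert (seqQuery T p, b) p.val :=
  FPF.val_eq_insert h.2.1.le
    ((seqQuery_spec hT hp fun hl => hl.2 ⟨p', h.1, h.2.1⟩).2 p' h) hb

lemma seqChild_spec (h : seqChild T p b = some p') :
    ImmSucc T p p' ∧ (seqQuery T p, b) ∈ p'.val := by
  unfold seqChild at h
  split_ifs at h with hex
  exact Option.some.inj h ▸ hex.choose_spec

lemma seqChild_eq_some (hT : IsSeqTree T) (hp : p ∈ T) (h : ImmSucc T p p')
    (hb : (seqQuery T p, b) ∈ p'.val) : seqChild T p b = some p' := by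
  have hex : ∃ p', ImmSucc T p p' ∧ (seqQuery T p, b) ∈ p'.val := ⟨p', h, hb⟩
  rw [seqChild, dif_pos hex, Option.some.injEq]
  exact Subtype.ext ((hex.choose_spec.1.val_eq_insert hT hp hex.choose_spec.2).trans
    (h.val_eq_insert hT hp hb).symm)

lemma seqWalk_concat : seqWalk T (L ++ [b]) = (seqWalk T L).bind (seqChild T · b) := by
  simp [seqWalk, List.foldlM_append]

lemma seqWalk_concat_eq_some (h : seqWalk T (L ++ [b]) = some p') :
    ∃ p, seqWalk T L = some p ∧ ImmSucc T p p' ∧ (seqQuery T p, b) ∈ p'.val := by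
  rw [seqWalk_concat, Option.bind_eq_some_iff] at h
  obtain ⟨p, hp, hc⟩ := h
  exact ⟨p, hp, seqChild_spec hc⟩

lemma seqWalk_mem (hT : IsSeqTree T) (h : seqWalk T L = some v) : v ∈ T := by
  induction L using List.reverseRecOn generalizing v with
  | nil => exact Option.some.inj h ▸ hT.1.1
  | append_singleton L b _ =>
    obtain ⟨_, -, hs, -⟩ := seqWalk_concat_eq_some h
    exact hs.1

lemma seqWalk_le_of_append {L' : List A} (h : seqWalk T (L ++ L') = some v) :
    ∃ p, seqWalk T L = some p ∧ p ≤ v := by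
  induction L' using List.reverseRecOn generalizing v with
  | nil => exact ⟨v, by simpa using h, le_rfl⟩
  | append_singleton L' b ih =>
    rw [← List.append_assoc] at h
    obtain ⟨u, hu, hs, -⟩ := seqWalk_concat_eq_some h
    obtain ⟨p, hp, hpu⟩ := ih hu
    exact ⟨p, hp, hpu.trans hs.2.1.le⟩

lemma exists_seqWalk_eq (hT : IsSeqTree T) (hv : v ∈ T) : ∃ L, seqWalk T L = some v := by
  induction hn : v.val.ncard using Nat.strong_induction_on generalizing v with
  | _ n ih =>
    rcases eq_or_ne v (FPF.empty A) with rfl | hne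
    · exact ⟨[], rfl⟩
    obtain ⟨m, hm, hmv⟩ :=
      exists_immSucc_of_lt hT.1.1 hv (lt_of_le_of_ne (hT.1.2.1 v hv) hne.symm)
    obtain ⟨L, hL⟩ := ih _ (hn ▸ Set.ncard_lt_ncard hmv.2.1 v.2.2) hm rfl
    have hleaf : ¬IsLeaf T m := fun hl => hl.2 ⟨v, hv, hmv.2.1⟩
    have hquery : seqQuery T m ∈ FPF.dom v := by
      rw [(seqQuery_spec hT hm hleaf).2 v hmv]
      exact Set.mem_insert _ _
    obtain ⟨b, hb⟩ := FPF.mem_dom.1 hquery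
    exact ⟨L ++ [b], by rw [seqWalk_concat, hL]; exact seqChild_eq_some hT hm hmv hb⟩

variable {mk : List A → A} {qp rp : A → A} {F : FPF A → Option A} {β : A → Option A}

lemma seqTreeOracle_apply (hmk : Function.Injective mk) (L : List A) :
    seqTreeOracle T mk qp rp F (mk L) = (seqWalk T L).bind fun p =>
      if IsLeaf T p then (F p).map rp else some (qp (seqQuery T p)) :=
  hmk.extend_apply _ _ L

lemma seqTreeOracle_eq_query (hmk : Function.Injective mk) (hqp : Function.Injective qp)
    (hqr : ∀ a c, qp a ≠ rp c) {a : A} :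
    seqTreeOracle T mk qp rp F (mk L) = some (qp a) ↔
      ∃ p, seqWalk T L = some p ∧ ¬IsLeaf T p ∧ seqQuery T p = a := by
  rw [seqTreeOracle_apply hmk, Option.bind_eq_some_iff]
  refine exists_congr fun p => and_congr_right fun _ => ?_
  split_ifs with hleaf
  · simpa [hleaf] using fun c _ => (hqr a c).symm
  · simp [hleaf, hqp.eq_iff]

lemma seqTreeOracle_eq_result (hmk : Function.Injective mk) (hrp : Function.Injective rp)
    (hqr : ∀ a c, qp a ≠ rp c) {c : A} :
    seqTreeOracle T mk qp rp F (mk L) = some (rp c) ↔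
      ∃ p, seqWalk T L = some p ∧ IsLeaf T p ∧ F p = some c := by
  rw [seqTreeOracle_apply hmk, Option.bind_eq_some_iff]
  refine exists_congr fun p => and_congr_right fun _ => ?_
  split_ifs with hleaf
  · simp [hleaf, hrp.eq_iff]
  · simpa [hleaf] using hqr _ c

lemma PInterrog.agreesP_of_seqWalk (hT : IsSeqTree T) (hmk : Function.Injective mk)
    (hqp : Function.Injective qp) (hqr : ∀ a c, qp a ≠ rp c)
    (hL : PInterrog mk qp (seqTreeOracle T mk qp rp F) β L) (hv : seqWalk T L = some v) :
    agreesP β v := by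
  induction L using List.reverseRecOn generalizing v with
  | nil =>
    obtain rfl := Option.some.inj hv
    exact fun _ _ h => absurd h (Set.notMem_empty _)
  | append_singleton L b ih =>
    obtain ⟨p, hp, hs, hb⟩ := seqWalk_concat_eq_some hv
    obtain ⟨a, ha, hβa⟩ := hL L.length (by simp)
    simp only [List.take_left, List.getElem_concat_length] at ha hβa
    obtain ⟨p₀, hp₀, -, rfl⟩ := (seqTreeOracle_eq_query hmk hqp hqr).1 ha
    obtain rfl := Option.some.inj (hp.symm.trans hp₀)
    intro x y hxy
    rw [hs.val_eq_insert hT (seqWalk_mem hT hp) hb, Set.mem_insert_iff] at hxy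
    rcases hxy with hxy | hxy
    · obtain ⟨rfl, rfl⟩ := Prod.mk.inj hxy
      exact hβa
    · exact ih (hL.of_prefix (List.prefix_append L [b])) hp hxy

lemma pInterrog_of_seqWalk (hmk : Function.Injective mk) {M : List A}
    (hv : seqWalk T M = some v) (hβ : agreesP β v) :
    PInterrog mk qp (seqTreeOracle T mk qp rp F) β M := by
  intro j hj
  obtain ⟨p', hp', hp'v⟩ := seqWalk_le_of_append (L := M.take (j + 1)) (L' := M.drop (j + 1))
    (by rwa [List.take_append_drop])
  rw [← List.take_append_getElem hj] at hp'
  obtain ⟨p, hp, hs, hb⟩ := seqWalk_concat_eq_some hp'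
  have hleaf : ¬IsLeaf T p := fun hl => hl.2 ⟨p', hs.1, hs.2.1⟩
  refine ⟨seqQuery T p, ?_, hβ (hp'v hb)⟩
  rw [seqTreeOracle_apply hmk, hp]
  simp [hleaf]

theorem phiPRel_seqTreeOracle_iff (hT : IsSeqTree T) (hmk : Function.Injective mk)
    (hqp : Function.Injective qp) (hrp : Function.Injective rp) (hqr : ∀ a c, qp a ≠ rp c) :
    phiPRel mk qp rp (seqTreeOracle T mk qp rp F) β b ↔
      ∃ v, IsLeaf T v ∧ agreesP β v ∧ F v = some b := by
  constructor
  · rintro ⟨L, hL, hLb⟩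
    obtain ⟨v, hv, hleaf, hvb⟩ := (seqTreeOracle_eq_result hmk hrp hqr).1 hLb
    exact ⟨v, hleaf, hL.agreesP_of_seqWalk hT hmk hqp hqr hv, hvb⟩
  · rintro ⟨v, hleaf, hβv, hvb⟩
    obtain ⟨M, hM⟩ := exists_seqWalk_eq hT hleaf.1
    exact ⟨M, pInterrog_of_seqWalk hmk hM hβv,
      (seqTreeOracle_eq_result hmk hrp hqr).2 ⟨v, hM, hleaf, hvb⟩⟩

end SeqTreeOracle

theorem statement14_general {A : Type u} (code : List A → A)
    (hcode : Function.Injective code) (q r : A) (hqr : q ≠ r)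
    (Φ : (A → Option A) → Option A) :
    (∃ α : A → Option A, ∀ (β : A → Option A) (b : A),
        Φ β = some b ↔ phiPRel code (fun x => code [q, x]) (fun x => code [r, x]) α β b)
    ↔ ∃ (T : Set (FPF A)) (F : FPF A → Option A), IsSeqTree T ∧
        ∀ (β : A → Option A) (b : A),
          Φ β = some b ↔ ∃ v, IsLeaf T v ∧ agreesP β v ∧ F v = some b := by
  have hqp : Function.Injective fun x => code [q, x] := fun a b h => by simpa using hcode h
  have hrp : Function.Injective fun x => code [r, x] := fun a b h => by simpa using hcode h
  have hdisj : ∀ a c, code [q, a] ≠ code [r, c] := fun a c h => hqr (List.cons.inj (hcode h)).1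
  have : Nonempty A := ⟨q⟩
  constructor
  · rintro ⟨α, hα⟩
    exact ⟨interrogTree code _ α, interrogResult code _ _ α, isSeqTree_interrogTree hqp,
      fun β b => (hα β b).trans (phiPRel_iff_interrogTree hqp hrp hdisj)⟩
  · rintro ⟨T, F, hT, hΦ⟩
    exact ⟨seqTreeOracle T code _ _ F,
      fun β b => (hΦ β b).trans (phiPRel_seqTreeOracle_iff hT hcode hqp hrp hdisj).symm⟩

/-- A partial function `Ptl(A,A) ⇀ A` is of the form `φ_α`
for some partial `α` iff it is partial sequential in the generalized sense
(non-total sequential trees, partial `F` on leaves). -/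
theorem statement14 {A : Type u} [Infinite A] (code : List A → A)
    (hcode : Function.Injective code) (q r : A) (hqr : q ≠ r)
    (Φ : (A → Option A) → Option A) :
    (∃ α : A → Option A, ∀ (β : A → Option A) (b : A),
        Φ β = some b ↔ phiPRel code (fun x => code [q, x]) (fun x => code [r, x]) α β b)
    ↔ ∃ (T : Set (FPF A)) (F : FPF A → Option A), IsSeqTree T ∧
        ∀ (β : A → Option A) (b : A),
          Φ β = some b ↔ ∃ v, IsLeaf T v ∧ agreesP β v ∧ F v = some b :=
  statement14_general code hcode q r hqr Φ

end OostenK2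
end
end
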